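/- arXiv:1401.2486 — 3 statements merged into one kernel-verified Lean document; each statement's English description precedes it below -/
import Mathlib

section
/- Let B be a unital C*-algebra, p ∈ B a full projection (i.e., the closed two-sided ideal generated by p is all of B, equivalently the linear span of BpB is dense in B), and set C = pBp. If C has a unique tracial state, then B has at most one tracial state. -/
/-!
A tracial state satisfies `τ (x * p * y) = τ (p * (y * x) * p)`; being positive it is continuous,
so by fullness of `p` it is determined by its values on the corner `pBp`. If `τ p = 0`, the
Cauchy–Schwarz inequality of the GNS form makes `τ` vanish on `pBp`, hence everywhere, which is
impossible; so `τ p > 0` and `(τ p)⁻¹ • τ` is a tracial state of the corner. Uniqueness on the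
corner then gives `τ₂ p • τ₁ = τ₁ p • τ₂`, and evaluating at `1` yields `τ₁ = τ₂`.
-/

/-- A tracial state on a unital complex C*-algebra, as a linear functional. -/
def IsTracialState {B : Type*} [NormedRing B] [StarRing B] [NormedAlgebra ℂ B]
    (τ : B →ₗ[ℂ] ℂ) : Prop :=
  τ 1 = 1 ∧ (∀ a : B, 0 ≤ (τ (star a * a)).re ∧ (τ (star a * a)).im = 0) ∧
    ∀ a b : B, τ (a * b) = τ (b * a)

/-- A tracial state on the corner `pBp`, encoded as a linear functional on `B`
which is unital at `p`, positive and tracial on corner elements. -/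
def IsCornerTracialState {B : Type*} [NormedRing B] [StarRing B] [NormedAlgebra ℂ B]
    (p : B) (τ : B →ₗ[ℂ] ℂ) : Prop :=
  τ p = 1 ∧
  (∀ a : B, 0 ≤ (τ (star (p * a * p) * (p * a * p))).re ∧
      (τ (star (p * a * p) * (p * a * p))).im = 0) ∧
  ∀ a b : B, τ ((p * a * p) * (p * b * p)) = τ ((p * b * p) * (p * a * p))

open scoped ComplexOrder

theorem apply_mul_mul_eq_apply_corner {B M : Type*} [Semigroup B] (f : B → M)
    (hf : ∀ a b : B, f (a * b) = f (b * a)) {p : B} (hp : IsIdempotentElem p) (x y : B) :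
    f (x * p * y) = f (p * (y * x) * p) := by
  calc f (x * p * y) = f (y * x * (p * p)) := by rw [hf, hp.eq, mul_assoc]
    _ = f (p * (y * x) * p) := by rw [← mul_assoc, hf]; simp only [mul_assoc]

theorem LinearMap.eq_of_apply_corner_eq {R B M : Type*} [CommSemiring R] [Semiring B] [Module R B]
    [TopologicalSpace B] [AddCommMonoid M] [Module R M] [TopologicalSpace M] [T2Space M]
    {p : B} (hp : IsIdempotentElem p)
    (hfull : Dense (Submodule.span R {z : B | ∃ x y : B, z = x * p * y} : Set B))
    {τ₁ τ₂ : B →ₗ[R] M} (hc₁ : Continuous τ₁) (hc₂ : Continuous τ₂)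
    (htr₁ : ∀ a b : B, τ₁ (a * b) = τ₁ (b * a)) (htr₂ : ∀ a b : B, τ₂ (a * b) = τ₂ (b * a))
    (hcorner : ∀ x : B, τ₁ (p * x * p) = τ₂ (p * x * p)) : τ₁ = τ₂ := by
  refine DFunLike.coe_injective (Continuous.ext_on hfull hc₁ hc₂ (LinearMap.eqOn_span' ?_))
  rintro _ ⟨x, y, rfl⟩
  rw [apply_mul_mul_eq_apply_corner τ₁ htr₁ hp, apply_mul_mul_eq_apply_corner τ₂ htr₂ hp,
    hcorner]

theorem PositiveLinearMap.apply_star_mul_eq_zero {A : Type*} [NonUnitalCStarAlgebra A]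
    [PartialOrder A] [StarOrderedRing A] (f : A →ₚ[ℂ] ℂ) {a : A} (ha : f (star a * a) = 0)
    (b : A) : f (star a * b) = 0 := by
  have hnorm : ‖f.toPreGNS a‖ = 0 := by simp [preGNS_norm_def, ha]
  simpa [hnorm, preGNS_inner_def] using norm_inner_le_norm (𝕜 := ℂ) (f.toPreGNS a) (f.toPreGNS b)

section NormedAlgebra

variable {B : Type*} [NormedRing B] [StarRing B] [NormedAlgebra ℂ B]

theorem IsTracialState.star_mul_self_nonneg {τ : B →ₗ[ℂ] ℂ} (hτ : IsTracialState τ) (a : B) :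
    0 ≤ τ (star a * a) :=
  Complex.nonneg_iff.mpr ⟨(hτ.2.1 a).1, (hτ.2.1 a).2.symm⟩

theorem IsTracialState.isCornerTracialState_inv_smul {τ : B →ₗ[ℂ] ℂ} (hτ : IsTracialState τ) {p : B}
    (hp : IsStarProjection p) (hτp : τ p ≠ 0) : IsCornerTracialState p ((τ p)⁻¹ • τ) := by
  have hτp_nonneg : 0 ≤ τ p := by
    simpa [hp.isSelfAdjoint.star_eq, hp.isIdempotentElem.eq] using hτ.star_mul_self_nonneg p
  refine ⟨inv_mul_cancel₀ hτp, fun a => ?_, fun a b => by simp [hτ.2.2 (p * a * p)]⟩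
  have := mul_nonneg (inv_nonneg.mpr hτp_nonneg) (hτ.star_mul_self_nonneg (p * a * p))
  exact ⟨(Complex.nonneg_iff.mp this).1, (Complex.nonneg_iff.mp this).2.symm⟩

end NormedAlgebra

section CStarAlgebra

variable {A : Type*} [CStarAlgebra A]

noncomputable def IsTracialState.toPositiveLinearMap [PartialOrder A] [StarOrderedRing A]
    {τ : A →ₗ[ℂ] ℂ} (hτ : IsTracialState τ) : A →ₚ[ℂ] ℂ :=
  PositiveLinearMap.mk₀ τ fun x hx => by
    obtain ⟨a, rfl⟩ := CStarAlgebra.nonneg_iff_eq_star_mul_self.mp hx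
    exact hτ.star_mul_self_nonneg a

@[simp]
theorem IsTracialState.toPositiveLinearMap_apply [PartialOrder A] [StarOrderedRing A]
    {τ : A →ₗ[ℂ] ℂ} (hτ : IsTracialState τ) (x : A) : hτ.toPositiveLinearMap x = τ x :=
  rfl

theorem IsTracialState.continuous {τ : A →ₗ[ℂ] ℂ} (hτ : IsTracialState τ) : Continuous τ :=
  letI := CStarAlgebra.spectralOrder A
  haveI := CStarAlgebra.spectralOrderedRing A
  map_continuous hτ.toPositiveLinearMap

theorem IsTracialState.apply_corner_eq_zero {τ : A →ₗ[ℂ] ℂ} (hτ : IsTracialState τ) {p : A}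
    (hp : IsStarProjection p) (hτp : τ p = 0) (x : A) : τ (p * x * p) = 0 := by
  let := CStarAlgebra.spectralOrder A
  have := CStarAlgebra.spectralOrderedRing A
  have hpp : star p * p = p := by rw [hp.isSelfAdjoint.star_eq, hp.isIdempotentElem.eq]
  have hzero := hτ.toPositiveLinearMap.apply_star_mul_eq_zero (a := p) (by simpa [hpp] using hτp)
    (x * p)
  simpa [hp.isSelfAdjoint.star_eq, mul_assoc] using hzero

theorem IsTracialState.apply_ne_zero_of_dense {τ : A →ₗ[ℂ] ℂ} (hτ : IsTracialState τ) {p : A}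
    (hp : IsStarProjection p)
    (hfull : Dense (Submodule.span ℂ {z : A | ∃ x y : A, z = x * p * y} : Set A)) :
    τ p ≠ 0 := by
  intro hτp
  have hτ0 : τ = 0 := LinearMap.eq_of_apply_corner_eq hp.isIdempotentElem hfull hτ.continuous
    continuous_zero hτ.2.2 (fun _ _ => rfl) (by simpa using hτ.apply_corner_eq_zero hp hτp)
  simpa [hτ0] using hτ.1

end CStarAlgebra

theorem stmt0_general {B : Type*} [NormedRing B] [StarRing B] [CStarRing B] [NormedAlgebra ℂ B]
    [StarModule ℂ B] [CompleteSpace B]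
    (p : B) (hproj : IsIdempotentElem p) (hsa : star p = p)
    (hfull : closure ((Submodule.span ℂ {z : B | ∃ x y : B, z = x * p * y} : Submodule ℂ B) : Set B)
        = Set.univ)
    (huniq : ∀ σ₁ σ₂ : B →ₗ[ℂ] ℂ, IsCornerTracialState p σ₁ → IsCornerTracialState p σ₂ →
        ∀ x : B, σ₁ (p * x * p) = σ₂ (p * x * p)) :
    ∀ τ₁ τ₂ : B →ₗ[ℂ] ℂ, IsTracialState τ₁ → IsTracialState τ₂ → τ₁ = τ₂ := by
  intro τ₁ τ₂ h₁ h₂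
  let : CStarAlgebra B := {}
  have hp : IsStarProjection p := ⟨hproj, hsa⟩
  have hdense := dense_iff_closure_eq.mpr hfull
  have hp₁ := h₁.apply_ne_zero_of_dense hp hdense
  have hp₂ := h₂.apply_ne_zero_of_dense hp hdense
  have hcorner := huniq _ _ (h₁.isCornerTracialState_inv_smul hp hp₁)
    (h₂.isCornerTracialState_inv_smul hp hp₂)
  have hscaled : τ₂ p • τ₁ = τ₁ p • τ₂ := by
    refine LinearMap.eq_of_apply_corner_eq hproj hdense (h₁.continuous.const_smul (τ₂ p))
      (h₂.continuous.const_smul (τ₁ p)) (by simp [h₁.2.2]) (by simp [h₂.2.2]) fun x => ?_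
    have := hcorner x
    simp only [LinearMap.smul_apply, smul_eq_mul] at this ⊢
    field_simp at this
    linear_combination this
  have hp_eq : τ₂ p = τ₁ p := by simpa [h₁.1, h₂.1] using LinearMap.congr_fun hscaled 1
  rw [hp_eq] at hscaled
  exact smul_right_injective _ hp₁ hscaled

/-- If `p` is a full projection in a unital C*-algebra `B` and the corner `pBp` has a
unique tracial state, then `B` has at most one tracial state. -/
theorem stmt0 {B : Type*} [NormedRing B] [StarRing B] [CStarRing B] [NormedAlgebra ℂ B]
    [StarModule ℂ B] [CompleteSpace B]
    (p : B) (hproj : IsIdempotentElem p) (hsa : star p = p)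
    (hfull : closure ((Submodule.span ℂ {z : B | ∃ x y : B, z = x * p * y} : Submodule ℂ B) : Set B)
        = Set.univ)
    (hexists : ∃ σ : B →ₗ[ℂ] ℂ, IsCornerTracialState p σ)
    (huniq : ∀ σ₁ σ₂ : B →ₗ[ℂ] ℂ, IsCornerTracialState p σ₁ → IsCornerTracialState p σ₂ →
        ∀ x : B, σ₁ (p * x * p) = σ₂ (p * x * p)) :
    ∀ τ₁ τ₂ : B →ₗ[ℂ] ℂ, IsTracialState τ₁ → IsTracialState τ₂ → τ₁ = τ₂ :=
  stmt0_general p hproj hsa hfull huniq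
end

section
/- Let A ⊂ B be a unital inclusion of C*-algebras with conditional expectation E : B → A, and suppose {(a_i, b_i)}_{i=1}^n is a quasi-basis, i.e., x = Σ_i a_i E(x b_i) = Σ_i E(a_i x) b_i for all x ∈ B. Then the Watatani index Σ_i a_i b_i is independent of the choice of quasi-basis. -/
theorem sum_mul_eq_sum_mul_of_quasiBasis {R ι κ : Type*} [NonUnitalSemiring R]
    [Fintype ι] [Fintype κ] (E : R → R) (a b : ι → R) (c d : κ → R)
    (hab : ∀ x : R, x = ∑ i, a i * E (x * b i))
    (hcd : ∀ x : R, x = ∑ j, E (c j * x) * d j) :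
    ∑ i, a i * b i = ∑ j, c j * d j :=
  calc ∑ i, a i * b i
      = ∑ i, a i * ∑ j, E (c j * b i) * d j := by
        refine Finset.sum_congr rfl fun i _ => ?_
        rw [← hcd (b i)]
    _ = ∑ j, (∑ i, a i * E (c j * b i)) * d j := by
        simp_rw [Finset.mul_sum, Finset.sum_mul, ← mul_assoc]
        exact Finset.sum_comm
    _ = ∑ j, c j * d j := by
        refine Finset.sum_congr rfl fun j _ => ?_
        rw [← hab (c j)]

theorem stmt4_general {B : Type*} [NormedRing B] [NormedAlgebra ℂ B]
    (E : B →ₗ[ℂ] B)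
    {n m : ℕ} (a b : Fin n → B) (c d : Fin m → B)
    -- {(aᵢ, bᵢ)} is a quasi-basis for E:
    (hab₁ : ∀ x : B, x = ∑ i, a i * E (x * b i))
    -- {(cⱼ, dⱼ)} is a quasi-basis for E:
    (hcd₂ : ∀ x : B, x = ∑ j, E (c j * x) * d j) :
    ∑ i, a i * b i = ∑ j, c j * d j :=
  sum_mul_eq_sum_mul_of_quasiBasis E a b c d hab₁ hcd₂

/-- Watatani index is independent of the choice of quasi-basis: if `{(aᵢ, bᵢ)}` and
`{(cⱼ, dⱼ)}` are quasi-bases for a conditional expectation `E : B → A`, then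
`∑ aᵢ bᵢ = ∑ cⱼ dⱼ`. -/
theorem stmt4 {B : Type*} [NormedRing B] [StarRing B] [CStarRing B] [NormedAlgebra ℂ B]
    [StarModule ℂ B] [CompleteSpace B]
    (A : StarSubalgebra ℂ B) (E : B →ₗ[ℂ] B)
    -- E is a conditional expectation onto A:
    (hEmem : ∀ x : B, E x ∈ A)
    (hEid : ∀ a ∈ A, E a = a)
    (hEbimod : ∀ a ∈ A, ∀ a' ∈ A, ∀ x : B, E (a * x * a') = a * E x * a')
    {n m : ℕ} (a b : Fin n → B) (c d : Fin m → B)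
    -- {(aᵢ, bᵢ)} is a quasi-basis for E:
    (hab₁ : ∀ x : B, x = ∑ i, a i * E (x * b i))
    (hab₂ : ∀ x : B, x = ∑ i, E (a i * x) * b i)
    -- {(cⱼ, dⱼ)} is a quasi-basis for E:
    (hcd₁ : ∀ x : B, x = ∑ j, c j * E (x * d j))
    (hcd₂ : ∀ x : B, x = ∑ j, E (c j * x) * d j) :
    ∑ i, a i * b i = ∑ j, c j * d j :=
  stmt4_general E a b c d hab₁ hcd₂
end

section
/- Let A be a unital simple C*-algebra and e ∈ A a nonzero projection. Then there exist finitely many elements x_1, …, x_n ∈ A such that Σ_{i=1}^n x_i e x_i* = 1. -/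
/-!
Since the invertible elements of a Banach algebra form an open set, the closure of a proper
two-sided ideal is again proper; so by simplicity the algebraic ideal generated by `e` is all
of `A`, and `1 = ∑ yᵢ e zᵢ` holds exactly. Because `(yᵢ - zᵢ*) e (yᵢ - zᵢ*)* ≥ 0`,
symmetrizing gives `2 = ∑ (yᵢ e zᵢ + zᵢ* e yᵢ*) ≤ ∑ yᵢ e yᵢ* + ∑ zᵢ* e zᵢ =: c`,
so `c` is strictly positive, and conjugating by `c ^ (-1/2)` turns `c` into `1`.
-/

namespace TwoSidedIdeal

section TopologicalClosure

variable {R : Type*} [Ring R] [TopologicalSpace R] [IsTopologicalRing R]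

def topologicalClosure (I : TwoSidedIdeal R) : TwoSidedIdeal R :=
  .mk' (closure I) (subset_closure I.zero_mem)
    (fun hx hy ↦ map_mem_closure₂ continuous_add hx hy fun _ ha _ hb ↦ I.add_mem ha hb)
    (fun hx ↦ map_mem_closure continuous_neg hx fun _ ha ↦ I.neg_mem ha)
    (fun {x _} hy ↦ map_mem_closure (f := (x * ·)) (continuous_const_mul x) hy
      fun _ ha ↦ I.mul_mem_left x _ ha)
    (fun {_ y} hx ↦ map_mem_closure (f := (· * y)) (continuous_mul_const y) hx
      fun _ ha ↦ I.mul_mem_right _ y ha)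

@[simp]
lemma coe_topologicalClosure (I : TwoSidedIdeal R) :
    (I.topologicalClosure : Set R) = closure I :=
  Set.ext fun x ↦ mem_mk' (closure (I : Set R)) _ _ _ _ _ x

lemma le_topologicalClosure (I : TwoSidedIdeal R) : I ≤ I.topologicalClosure := fun _ hx ↦ by
  simpa only [← SetLike.mem_coe, coe_topologicalClosure] using subset_closure hx

lemma isClosed_topologicalClosure (I : TwoSidedIdeal R) :
    IsClosed (I.topologicalClosure : Set R) := by
  simpa only [coe_topologicalClosure] using isClosed_closure

end TopologicalClosure

variable {R : Type*}

lemma topologicalClosure_ne_top [NormedRing R] [HasSummableGeomSeries R] {I : TwoSidedIdeal R}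
    (hI : I ≠ ⊤) : I.topologicalClosure ≠ ⊤ := by
  have hIsub : (I : Set R) ⊆ nonunits R := fun x hx hu ↦
    hI <| I.eq_top <| by simpa using I.mul_mem_left (hu.unit⁻¹ : Rˣ) x hx
  intro htop
  have h1 : (1 : R) ∈ closure (I : Set R) := by
    rw [← coe_topologicalClosure, htop]; trivial
  exact one_notMem_nonunits (closure_minimal hIsub nonunits.isClosed h1)

lemma span_singleton_eq_top_of_forall_isClosed [NormedRing R] [HasSummableGeomSeries R]
    (hsimple : ∀ I : TwoSidedIdeal R, IsClosed (I : Set R) → I = ⊥ ∨ I = ⊤)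
    {a : R} (ha : a ≠ 0) : span {a} = ⊤ := by
  by_contra hne
  have ha_mem : a ∈ (span {a}).topologicalClosure := le_topologicalClosure _ (subset_span rfl)
  rcases hsimple _ (isClosed_topologicalClosure _) with hbot | htop
  · rw [hbot] at ha_mem
    exact ha ha_mem
  · exact topologicalClosure_ne_top hne htop

lemma mem_span_singleton_iff_exists_sum [Ring R] {a x : R} :
    x ∈ span {a} ↔ ∃ (n : ℕ) (y z : Fin n → R), ∑ i, y i * a * z i = x := by
  constructor
  · rw [mem_span_iff_mem_addSubgroup_closure]
    intro hx
    induction hx using AddSubgroup.closure_induction with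
    | mem x hx =>
      obtain ⟨_, ⟨r, -, _, rfl, rfl⟩, s, -, rfl⟩ := hx
      exact ⟨1, fun _ ↦ r, fun _ ↦ s, by simp⟩
    | zero => exact ⟨0, ![], ![], by simp⟩
    | add _ _ _ _ hu hv =>
      obtain ⟨m, y₁, z₁, rfl⟩ := hu
      obtain ⟨n, y₂, z₂, rfl⟩ := hv
      exact ⟨m + n, Fin.append y₁ y₂, Fin.append z₁ z₂, by simp [Fin.sum_univ_add]⟩
    | neg _ _ hu =>
      obtain ⟨n, y, z, rfl⟩ := hu
      exact ⟨n, -y, z, by simp [Finset.sum_neg_distrib]⟩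
  · rintro ⟨n, y, z, rfl⟩
    exact sum_mem fun i _ ↦ mul_mem_right _ _ _ (mul_mem_left _ _ _ (subset_span rfl))

end TwoSidedIdeal

section StarOrderedRing

variable {R : Type*} [Ring R] [PartialOrder R] [StarRing R] [StarOrderedRing R]
  {p : R} (hp : 0 ≤ p)
include hp

lemma mul_mul_add_star_le (y z : R) :
    y * p * z + star (y * p * z) ≤ y * p * star y + star z * p * z := by
  rw [← sub_nonneg]
  convert star_right_conjugate_nonneg hp (y - star z) using 1
  simp only [star_mul, star_sub, star_star, (IsSelfAdjoint.of_nonneg hp).star_eq]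
  noncomm_ring

lemma sum_mul_mul_add_star_le {n : ℕ} (y z : Fin n → R) :
    ∑ i, y i * p * z i + star (∑ i, y i * p * z i) ≤
      ∑ i, Fin.append y (star z) i * p * star (Fin.append y (star z) i) := by
  rw [star_sum, ← Finset.sum_add_distrib, Fin.sum_univ_add, ← Finset.sum_add_distrib]
  simp only [Fin.append_left, Fin.append_right, Pi.star_apply, star_star]
  exact Finset.sum_le_sum fun i _ ↦ mul_mul_add_star_le hp (y i) (z i)

end StarOrderedRing

lemma exists_sum_mul_mul_star_eq_one {A : Type*} [CStarAlgebra A] [PartialOrder A]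
    [StarOrderedRing A] {ι : Type*} [Fintype ι] (p : A) (w : ι → A)
    (hw : IsStrictlyPositive (∑ i, w i * p * star (w i))) :
    ∃ x : ι → A, ∑ i, x i * p * star (x i) = 1 := by
  set d := (∑ i, w i * p * star (w i)) ^ (-(1 / 2) : ℝ)
  have hd : star d = d := CFC.rpow_nonneg.star_eq
  refine ⟨fun i ↦ d * w i, ?_⟩
  calc ∑ i, d * w i * p * star (d * w i)
      = d * (∑ i, w i * p * star (w i)) * d := by
        simp only [star_mul, hd, Finset.mul_sum, Finset.sum_mul, mul_assoc]
    _ = 1 := CFC.conjugate_rpow_neg_one_half _ hw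

/-- In a unital simple C*-algebra, for any nonzero projection `e` there exist finitely
many elements `x₁, …, xₙ` with `∑ xᵢ e xᵢ* = 1` (Watatani, Lemma 2.1.6). -/
theorem stmt17 {A : Type*} [NormedRing A] [StarRing A] [CStarRing A] [NormedAlgebra ℂ A]
    [StarModule ℂ A] [CompleteSpace A]
    (hsimple : ∀ I : TwoSidedIdeal A, IsClosed (I : Set A) → I = ⊥ ∨ I = ⊤)
    (e : A) (he : IsIdempotentElem e) (hesa : star e = e) (hne : e ≠ 0) :
    ∃ (n : ℕ) (x : Fin n → A), ∑ i, x i * e * star (x i) = 1 := by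
  let : CStarAlgebra A := {}
  let := CStarAlgebra.spectralOrder A
  have := CStarAlgebra.spectralOrderedRing A
  have he_nonneg : 0 ≤ e := IsStarProjection.nonneg ⟨he, hesa⟩
  have h1 : (1 : A) ∈ TwoSidedIdeal.span {e} := by
    rw [TwoSidedIdeal.span_singleton_eq_top_of_forall_isClosed hsimple hne]
    trivial
  obtain ⟨n, y, z, hyz⟩ := TwoSidedIdeal.mem_span_singleton_iff_exists_sum.mp h1
  have h2 := sum_mul_mul_add_star_le he_nonneg y z
  rw [hyz, star_one] at h2
  obtain ⟨x, hx⟩ := exists_sum_mul_mul_star_eq_one e _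
    ((isStrictlyPositive_one.add_nonneg zero_le_one).of_le h2)
  exact ⟨_, x, hx⟩
end
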